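/- arXiv:2210.09521 — 2 statements merged into one kernel-verified Lean document; each statement's English description precedes it below -/
import Mathlib

section
/- For integers n and k with 1 ≤ k and n ≥ 2k, the sum of binomial coefficients ∑_{i=1}^{k} C(n,i) is at most C(n,k) · (n-k+1)/(n-2k+1). -/
/-- For integers `n` and `k` with `1 ≤ k` and `n ≥ 2k`, the sum of binomial coefficients
`∑_{i=1}^{k} C(n,i)` is at most `C(n,k) · (n-k+1)/(n-2k+1)`. -/
theorem stmt_0 (n k : ℕ) (hk : 1 ≤ k) (hn : 2 * k ≤ n) :
    (∑ i ∈ Finset.Icc 1 k, (n.choose i : ℚ)) ≤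
      (n.choose k : ℚ) * ((n : ℚ) - k + 1) / ((n : ℚ) - 2 * k + 1) := by
  have hkn : k < n := by omega
  have hnQ : (0:ℚ) < (n:ℚ) - k + 1 := by
    have : (k:ℚ) ≤ n := by exact_mod_cast hkn.le
    linarith
  have hdQ : (0:ℚ) < (n:ℚ) - 2*k + 1 := by
    have : (2*k:ℚ) ≤ n := by exact_mod_cast hn
    push_cast at this ⊢
    linarith
  set r : ℚ := (k:ℚ) / ((n:ℚ) - k + 1) with hr
  have hr0 : 0 ≤ r := by positivity
  have hr1 : r < 1 := by
    rw [hr, div_lt_one hnQ]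
    have : (2*k:ℚ) ≤ n := by exact_mod_cast hn
    linarith
  -- step lemma
  have step : ∀ j : ℕ, j + 1 ≤ k → (n.choose j : ℚ) ≤ r * n.choose (j+1) := by
    intro j hj
    have hjn : j < n := by omega
    have hid : (n.choose (j+1) : ℚ) * (j+1) = (n.choose j : ℚ) * ((n:ℚ) - j) := by
      have h := Nat.choose_succ_right_eq n j
      have h2 : ((n.choose (j+1) * (j+1) : ℕ) : ℚ) = ((n.choose j * (n - j) : ℕ) : ℚ) := by
        exact_mod_cast congrArg (fun x : ℕ => (x : ℚ)) h
      push_cast [Nat.cast_sub hjn.le] at h2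
      linarith
    rw [hr, div_mul_eq_mul_div, le_div_iff₀ hnQ]
    have hjk : (j:ℚ) + 1 ≤ k := by exact_mod_cast hj
    have hc0 : (0:ℚ) ≤ n.choose (j+1) := by positivity
    have hnQ' : (j:ℚ) < n := by exact_mod_cast hjn
    nlinarith [hid, mul_le_mul_of_nonneg_left hjk hc0]
  -- main bound: choose i ≤ r^j * choose k when i + j = k
  have bd : ∀ j i : ℕ, i + j = k → (n.choose i : ℚ) ≤ r ^ j * n.choose k := by
    intro j
    induction j with
    | zero => intro i hi; simp [show i = k by omega]
    | succ j ih =>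
      intro i hi
      have h1 : (n.choose i : ℚ) ≤ r * n.choose (i+1) := step i (by omega)
      have h2 : (n.choose (i+1) : ℚ) ≤ r ^ j * n.choose k := ih (i+1) (by omega)
      calc (n.choose i : ℚ) ≤ r * n.choose (i+1) := h1
        _ ≤ r * (r ^ j * n.choose k) := by
            exact mul_le_mul_of_nonneg_left h2 hr0
        _ = r ^ (j+1) * n.choose k := by ring
  have hterm : ∀ i ∈ Finset.Icc 1 k, (n.choose i : ℚ) ≤ r ^ (k - i) * n.choose k := by
    intro i hi
    simp only [Finset.mem_Icc] at hi
    exact bd (k - i) i (by omega)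
  have hsum1 : (∑ i ∈ Finset.Icc 1 k, (n.choose i : ℚ)) ≤
      ∑ i ∈ Finset.Icc 1 k, r ^ (k - i) * n.choose k := Finset.sum_le_sum hterm
  have hre : (∑ i ∈ Finset.Icc 1 k, r ^ (k - i)) = ∑ j ∈ Finset.range k, r ^ j := by
    apply Finset.sum_nbij' (fun i => k - i) (fun j => k - j) <;>
      intros <;> simp_all [Finset.mem_Icc, Finset.mem_range] <;> omega
  have hgeom : (∑ j ∈ Finset.range k, r ^ j) ≤ 1 / (1 - r) := by
    have h1 : (0:ℚ) < 1 - r := by linarith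
    have hpk : 0 ≤ r ^ k := by positivity
    rw [geom_sum_eq (ne_of_lt hr1) k]
    rw [show (r ^ k - 1) / (r - 1) = (1 - r ^ k) / (1 - r) by
      rw [← neg_div_neg_eq]; ring_nf]
    gcongr
    linarith
  have h1r : 1 - r = ((n:ℚ) - 2*k + 1) / ((n:ℚ) - k + 1) := by
    rw [hr]
    field_simp
    ring
  have hc0 : (0:ℚ) ≤ n.choose k := by positivity
  calc (∑ i ∈ Finset.Icc 1 k, (n.choose i : ℚ))
      ≤ ∑ i ∈ Finset.Icc 1 k, r ^ (k - i) * n.choose k := hsum1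
    _ = (∑ i ∈ Finset.Icc 1 k, r ^ (k - i)) * n.choose k := by
        rw [Finset.sum_mul]
    _ = (∑ j ∈ Finset.range k, r ^ j) * n.choose k := by rw [hre]
    _ ≤ (1 / (1 - r)) * n.choose k := by
        exact mul_le_mul_of_nonneg_right hgeom hc0
    _ = (n.choose k : ℚ) * ((n : ℚ) - k + 1) / ((n : ℚ) - 2 * k + 1) := by
        rw [h1r]
        field_simp
end

section
/- In the CFI construction over the complete graph K_k, for every subset F ⊆ E(K_k) there is exactly one automorphism h_F of the enlarged graph X(K_k) that flips precisely the edge-vertex pairs e^0, e^1 for e ∈ F; it is given by h_F(e^i) = e^{1-i} for e ∈ F, h_F(e^i) = e^i for e ∉ F, and h_F(v^X) = v^{X △ (F ∩ E(v))}. -/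
open scoped Classical

/-- Vertices of the CFI-enlarged graph `X(K_k)` over the complete graph on `Fin k`:
"node vertices" `v^X` with `X ⊆ E(v)` (a set of non-diagonal edges incident to `v`), and
"edge vertices" `e^0, e^1` for each edge `e` of `K_k`. -/
def CFIVert (k : ℕ) : Type :=
  {p : Fin k × Set (Sym2 (Fin k)) // ∀ e ∈ p.2, ¬ e.IsDiag ∧ p.1 ∈ e} ⊕
    ({e : Sym2 (Fin k) // ¬ e.IsDiag} × Bool)

/-- The CFI-enlarged graph `X(K_k)`: `v^X — e^1` iff `e ∈ X`, `v^X — e^0` iff `e ∉ X`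
(for `e ∈ E(v)`), and `e^0 — e^1` for every edge `e`. -/
def CFIGraph (k : ℕ) : SimpleGraph (CFIVert k) where
  Adj a b :=
    match a, b with
    | .inl ⟨⟨v, X⟩, _⟩, .inr (e, i) => v ∈ e.1 ∧ (i = true ↔ e.1 ∈ X)
    | .inr (e, i), .inl ⟨⟨v, X⟩, _⟩ => v ∈ e.1 ∧ (i = true ↔ e.1 ∈ X)
    | .inr (e, i), .inr (f, j) => e = f ∧ i ≠ j
    | .inl _, .inl _ => False
  symm := by
    constructor
    rintro (⟨⟨v, X⟩, hX⟩ | ⟨e, i⟩) (⟨⟨w, Y⟩, hY⟩ | ⟨f, j⟩) h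
    · exact h
    · exact h
    · exact h
    · exact ⟨h.1.symm, h.2.symm⟩
  loopless := by
    constructor
    rintro (⟨⟨v, X⟩, hX⟩ | ⟨e, i⟩) h
    · exact h
    · exact h.2 rfl

/-- The coloring of the CFI-enlarged graph: each vertex is colored by the node or edge of
the base graph it comes from. -/
def cfiColor (k : ℕ) : CFIVert k → (Fin k) ⊕ {e : Sym2 (Fin k) // ¬ e.IsDiag} :=
  fun a =>
    match a with
    | .inl ⟨⟨v, _⟩, _⟩ => .inl v
    | .inr (e, _) => .inr e

/-- The explicit candidate automorphism `h_F`: it flips `e^0 ↔ e^1` for `e ∈ F` and maps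
`v^X` to `v^{X △ (F ∩ E(v))}`. -/
noncomputable def cfiAut (k : ℕ) (F : Set (Sym2 (Fin k))) (hF : ∀ e ∈ F, ¬ e.IsDiag) :
    CFIVert k → CFIVert k :=
  fun a =>
    match a with
    | .inl ⟨⟨v, X⟩, hX⟩ =>
        .inl ⟨⟨v, symmDiff X (F ∩ {e | v ∈ e})⟩, by
          intro e he
          rw [Set.mem_symmDiff] at he
          rcases he with ⟨heX, _⟩ | ⟨⟨heF, hev⟩, _⟩
          · exact hX e heX
          · exact ⟨hF e heF, hev⟩⟩
    | .inr (e, i) => .inr (e, if e.1 ∈ F then !i else i)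


/-!
Colour preservation pins every automorphism `h` down on the edge vertices: `h(e^i) ∈ {e^0, e^1}`,
so the set of flipped pairs determines `h` there. A node vertex `v^X` is determined by its colour
`v` and by which of the `e^1` it is adjacent to, so `h` is then determined everywhere. Conversely
`h_F` is an involution preserving adjacency: flipping `e^0 ↔ e^1` for `e ∈ F` is compensated by
toggling membership of `e` in the label `X` of each endpoint `v` of `e`.
-/

section CFI

variable {k : ℕ}

lemma cfiColor_eq_inr_iff {a : CFIVert k} {e : {e : Sym2 (Fin k) // ¬ e.IsDiag}} :
    cfiColor k a = .inr e ↔ ∃ i, a = .inr (e, i) := by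
  rcases a with ⟨⟨v, X⟩, hX⟩ | ⟨f, j⟩
  · simp [cfiColor]
  · simp only [cfiColor, Sum.inr.injEq]
    exact ⟨by rintro rfl; exact ⟨j, rfl⟩, by rintro ⟨i, h⟩; cases h; rfl⟩

lemma eq_of_cfiColor_eq_of_adj_inr_iff {a b : CFIVert k} (hcol : cfiColor k a = cfiColor k b)
    (hadj : ∀ c, (CFIGraph k).Adj a (.inr c) ↔ (CFIGraph k).Adj b (.inr c)) : a = b := by
  rcases a with ⟨⟨v, X⟩, hX⟩ | ⟨e, i⟩ <;> rcases b with ⟨⟨w, Y⟩, hY⟩ | ⟨f, j⟩ <;>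
    simp only [cfiColor, Sum.inl.injEq, Sum.inr.injEq, reduceCtorEq] at hcol
  · subst hcol
    suffices X = Y by subst this; rfl
    ext e
    by_cases he : ¬ e.IsDiag ∧ v ∈ e
    · have adj_iff (Z) (hZ) : (CFIGraph k).Adj (.inl ⟨⟨v, Z⟩, hZ⟩) (.inr (⟨e, he.1⟩, true)) ↔
          e ∈ Z := by simp [CFIGraph, he.2]
      exact (adj_iff X hX).symm.trans ((hadj _).trans (adj_iff Y hY))
    · exact iff_of_false (fun h => he (hX e h)) (fun h => he (hY e h))
  · subst hcol
    have : (CFIGraph k).Adj (.inr (e, j)) (.inr (e, !i)) := (hadj (e, !i)).1 ⟨rfl, by simp⟩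
    cases i <;> cases j <;> simp_all [CFIGraph] <;> rfl

lemma CFIGraph.iso_ext_of_apply_inr {g h : CFIGraph k ≃g CFIGraph k}
    (hg : ∀ a, cfiColor k (g a) = cfiColor k a) (hh : ∀ a, cfiColor k (h a) = cfiColor k a)
    (hgh : ∀ p, g (.inr p) = h (.inr p)) : g = h := by
  ext x
  refine eq_of_cfiColor_eq_of_adj_inr_iff (by rw [hg, hh]) fun p => ?_
  obtain ⟨i, hi⟩ := cfiColor_eq_inr_iff.1
    (show cfiColor k (g.symm (.inr p)) = .inr p.1 from
      (hg _).symm.trans (congrArg (cfiColor k) (g.apply_symm_apply _)))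
  have hgp : g (.inr (p.1, i)) = .inr p := hi ▸ g.apply_symm_apply _
  have hhp : h (.inr (p.1, i)) = .inr p := (hgh _).symm.trans hgp
  calc (CFIGraph k).Adj (g x) (.inr p)
      ↔ (CFIGraph k).Adj (g x) (g (.inr (p.1, i))) := by rw [hgp]
    _ ↔ (CFIGraph k).Adj (h x) (h (.inr (p.1, i))) := g.map_adj_iff.trans h.map_adj_iff.symm
    _ ↔ (CFIGraph k).Adj (h x) (.inr p) := by rw [hhp]

variable {F : Set (Sym2 (Fin k))} {hF : ∀ e ∈ F, ¬ e.IsDiag}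

lemma cfiAut_involutive : Function.Involutive (cfiAut k F hF) := by
  rintro (⟨⟨v, X⟩, hX⟩ | ⟨e, i⟩)
  · simp only [cfiAut, symmDiff_symmDiff_cancel_right]
    rfl
  · by_cases h : e.1 ∈ F <;> simp [cfiAut, h] <;> rfl

lemma cfiAut_adj {a b : CFIVert k} (hab : (CFIGraph k).Adj a b) :
    (CFIGraph k).Adj (cfiAut k F hF a) (cfiAut k F hF b) := by
  rcases a with ⟨⟨v, X⟩, hX⟩ | ⟨e, i⟩ <;> rcases b with ⟨⟨w, Y⟩, hY⟩ | ⟨f, j⟩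
  · exact hab.elim
  · obtain ⟨hv, hj⟩ := hab
    refine ⟨hv, ?_⟩
    cases j <;> by_cases hf : f.1 ∈ F <;> simp_all [Set.mem_symmDiff]
  · obtain ⟨hw, hi⟩ := hab
    refine ⟨hw, ?_⟩
    cases i <;> by_cases he : e.1 ∈ F <;> simp_all [Set.mem_symmDiff]
  · obtain ⟨rfl, hij⟩ := hab
    refine ⟨rfl, ?_⟩
    by_cases he : e.1 ∈ F <;> simp [he, hij]

noncomputable def cfiAutIso (F : Set (Sym2 (Fin k))) (hF : ∀ e ∈ F, ¬ e.IsDiag) :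
    CFIGraph k ≃g CFIGraph k where
  toEquiv := Function.Involutive.toPerm (cfiAut k F hF) cfiAut_involutive
  map_rel_iff' {a b} := by
    change (CFIGraph k).Adj (cfiAut k F hF a) (cfiAut k F hF b) ↔ _
    refine ⟨fun hab => ?_, cfiAut_adj⟩
    simpa only [cfiAut_involutive a, cfiAut_involutive b] using cfiAut_adj (hF := hF) hab

@[simp] lemma cfiAutIso_apply (a : CFIVert k) : cfiAutIso F hF a = cfiAut k F hF a := rfl

lemma cfiColor_cfiAutIso (a : CFIVert k) : cfiColor k (cfiAutIso F hF a) = cfiColor k a := by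
  rcases a with ⟨⟨v, X⟩, hX⟩ | ⟨e, i⟩ <;> rfl

lemma cfiAutIso_inr_eq_flip_iff (e : {e : Sym2 (Fin k) // ¬ e.IsDiag}) (i : Bool) :
    cfiAutIso F hF (.inr (e, i)) = .inr (e, !i) ↔ e.1 ∈ F := by
  change (Sum.inr (e, if e.1 ∈ F then !i else i) : CFIVert k) = _ ↔ _
  by_cases he : e.1 ∈ F <;> cases i <;> simp [he]

lemma apply_inr_eq_cfiAutIso {f : CFIVert k → CFIVert k}
    (hcol : ∀ a, cfiColor k (f a) = cfiColor k a)
    (hflip : ∀ e i, f (.inr (e, i)) = .inr (e, !i) ↔ e.1 ∈ F)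
    (p : {e : Sym2 (Fin k) // ¬ e.IsDiag} × Bool) : f (.inr p) = cfiAutIso F hF (.inr p) := by
  obtain ⟨e, i⟩ := p
  obtain ⟨j, hj⟩ := cfiColor_eq_inr_iff.1 (hcol (.inr (e, i)))
  obtain ⟨j', hj'⟩ := cfiColor_eq_inr_iff.1 (cfiColor_cfiAutIso (hF := hF) (.inr (e, i)))
  have inr_eq_iff (b c : Bool) : (Sum.inr (e, b) : CFIVert k) = .inr (e, c) ↔ b = c := by simp
  have hbits : j = !i ↔ j' = !i :=
    calc j = !i ↔ f (.inr (e, i)) = .inr (e, !i) := (inr_eq_iff _ _).symm.trans hj.congr_left.symm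
      _ ↔ cfiAutIso F hF (.inr (e, i)) = .inr (e, !i) :=
        (hflip e i).trans (cfiAutIso_inr_eq_flip_iff e i).symm
      _ ↔ j' = !i := hj'.congr_left.trans (inr_eq_iff _ _)
  have hjj' : j = j' := by cases i <;> cases j <;> cases j' <;> simp_all
  exact hj.trans (hjj' ▸ hj'.symm)

end CFI

/-- For every subset `F` of edges of `K_k`, there is exactly one color-preserving
automorphism of the enlarged graph `X(K_k)` that flips precisely the edge vertices
`e^0, e^1` for `e ∈ F`; moreover it is given by `h_F(e^i) = e^{1-i}` for `e ∈ F`,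
`h_F(e^i) = e^i` for `e ∉ F`, and `h_F(v^X) = v^{X △ (F ∩ E(v))}`. -/
theorem stmt_11 (k : ℕ) (F : Set (Sym2 (Fin k))) (hF : ∀ e ∈ F, ¬ e.IsDiag) :
    (∃! h : CFIGraph k ≃g CFIGraph k,
        (∀ a, cfiColor k (h a) = cfiColor k a) ∧
        (∀ (e : {e : Sym2 (Fin k) // ¬ e.IsDiag}) (i : Bool),
          h (Sum.inr (e, i)) = Sum.inr (e, !i) ↔ e.1 ∈ F)) ∧
    (∀ h : CFIGraph k ≃g CFIGraph k,
        ((∀ a, cfiColor k (h a) = cfiColor k a) ∧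
          (∀ (e : {e : Sym2 (Fin k) // ¬ e.IsDiag}) (i : Bool),
            h (Sum.inr (e, i)) = Sum.inr (e, !i) ↔ e.1 ∈ F)) →
        ∀ a, h a = cfiAut k F hF a) := by
  have eq_cfiAutIso (h : CFIGraph k ≃g CFIGraph k)
      (hh : (∀ a, cfiColor k (h a) = cfiColor k a) ∧
        ∀ e i, h (Sum.inr (e, i)) = Sum.inr (e, !i) ↔ e.1 ∈ F) : h = cfiAutIso F hF :=
    CFIGraph.iso_ext_of_apply_inr hh.1 cfiColor_cfiAutIso (apply_inr_eq_cfiAutIso hh.1 hh.2)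
  exact ⟨⟨cfiAutIso F hF, ⟨cfiColor_cfiAutIso, cfiAutIso_inr_eq_flip_iff⟩, eq_cfiAutIso⟩,
    fun h hh a => by rw [eq_cfiAutIso h hh, cfiAutIso_apply]⟩
end
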